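/- arXiv:2104.02161 — 4 statements merged into one kernel-verified Lean document; each statement's English description precedes it below -/
import Mathlib

section
/- Let A, B ⊆ ℝⁿ be nonempty closed sets, r* ≥ 0, γ > 0, ω ∈ [0, 2), and 0 < c < γ/2. Let b ∈ B, a⁺ ∈ P_A(b), b⁺ ∈ P_B(a⁺) with r := ‖a⁺ − b⁺‖ > r*. Assume: (i) the angle estimate (1 − cos α)/(r − r*)^ω ≥ γ holds, where α = ∠(b − a⁺, b⁺ − a⁺); and (ii) Hölder regularity at this building block: there is no b' ∈ B with ‖b' − a⁺‖ ≤ (1 + c)·r, a⁺ ∈ P_A(b'), and cos∠(b' − b⁺, a⁺ − b⁺) > √c·(r − r*)^{ω/2}. Then the three-point estimate ‖a⁺ − b⁺‖² + ℓ·‖b − b⁺‖² ≤ ‖b − a⁺‖² holds with ℓ = min{1/2, 1 − √(2c/γ), c/(2 + c)}. -/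
open Set Metric Filter Topology
open scoped RealInnerProductSpace

noncomputable section

def projSet {E : Type*} [NormedAddCommGroup E] (S : Set E) (x : E) : Set E :=
  {s | s ∈ S ∧ ‖x - s‖ = Metric.infDist x S}

def cosAngle {n : ℕ} (u v : EuclideanSpace ℝ (Fin n)) : ℝ := ⟪u, v⟫ / (‖u‖ * ‖v‖)

/-!
Write `r = ‖a⁺ - b⁺‖ ≤ R = ‖b - a⁺‖` and `D = ‖b - b⁺‖`. If `R > (1 + c) r`, the triangle
inequality `D ≤ R + r` alone gives the estimate with `ℓ = c/(2+c)`. Otherwise `b` itself is an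
admissible `b'` in the regularity condition, so `⟪b - b⁺, a⁺ - b⁺⟫ ≤ √c s^{1/2} D r` with
`s = (r - r*)^ω`, while the angle condition forces `D² ≥ 2γ s r²`. Together they bound
`R² - r² - D² = -2⟪b - b⁺, a⁺ - b⁺⟫` below by `-√(2c/γ) D²`.
-/

theorem norm_sub_le_of_mem_projSet {E : Type*} [NormedAddCommGroup E] {S : Set E} {x s y : E}
    (hs : s ∈ projSet S x) (hy : y ∈ S) : ‖x - s‖ ≤ ‖x - y‖ := by
  rw [hs.2, ← dist_eq_norm]
  exact infDist_le_dist_of_mem hy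

theorem inner_le_mul_of_cosAngle_le {n : ℕ} {u v : EuclideanSpace ℝ (Fin n)} {t : ℝ}
    (h : cosAngle u v ≤ t) : ⟪u, v⟫ ≤ t * (‖u‖ * ‖v‖) := by
  have hcos : cosAngle u v = Real.cos (InnerProductGeometry.angle u v) :=
    (InnerProductGeometry.cos_angle u v).symm
  rw [← InnerProductGeometry.cos_angle_mul_norm_mul_norm, ← hcos]
  exact mul_le_mul_of_nonneg_right h (by positivity)

section ThreePoint

variable {E : Type*}

theorem three_point_of_le_one_add_mul [SeminormedAddCommGroup E] {a b p : E} {c ℓ : ℝ}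
    (hc : 0 ≤ c) (hℓ : ℓ ≤ c / (2 + c)) (hfar : (1 + c) * ‖a - p‖ ≤ ‖b - a‖) :
    ‖a - p‖ ^ 2 + ℓ * ‖b - p‖ ^ 2 ≤ ‖b - a‖ ^ 2 := by
  have hD : ‖b - p‖ ≤ ‖b - a‖ + ‖a - p‖ := norm_sub_le_norm_sub_add_norm_sub b a p
  calc ‖a - p‖ ^ 2 + ℓ * ‖b - p‖ ^ 2
      ≤ ‖a - p‖ ^ 2 + c / (2 + c) * (‖b - a‖ + ‖a - p‖) ^ 2 := by gcongr
    _ ≤ ‖b - a‖ ^ 2 := by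
        rw [div_mul_eq_mul_div, ← le_sub_iff_add_le', div_le_iff₀ (by positivity)]
        nlinarith [mul_le_mul_of_nonneg_right hfar (by positivity : 0 ≤ ‖b - a‖ + ‖a - p‖)]

variable [NormedAddCommGroup E] [InnerProductSpace ℝ E]

theorem two_mul_mul_sq_le_norm_sub_sq {a b p : E} {κ : ℝ} (hκ : 0 ≤ κ)
    (hpa : ‖p - a‖ ≤ ‖b - a‖) (hangle : ⟪b - a, p - a⟫ ≤ (1 - κ) * (‖b - a‖ * ‖p - a‖)) :
    2 * κ * ‖p - a‖ ^ 2 ≤ ‖b - p‖ ^ 2 := by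
  have hsq : ‖b - p‖ ^ 2 = ‖b - a‖ ^ 2 - 2 * ⟪b - a, p - a⟫ + ‖p - a‖ ^ 2 := by
    rw [← norm_sub_sq_real, sub_sub_sub_cancel_right]
  nlinarith [sq_nonneg (‖b - a‖ - ‖p - a‖), norm_nonneg (p - a),
    mul_le_mul_of_nonneg_left hpa (mul_nonneg hκ (norm_nonneg (p - a)))]

theorem three_point_of_inner_le {a b p : E} {κ μ q ℓ : ℝ} (hκ : 0 ≤ κ) (hμ : 0 ≤ μ)
    (hq : 0 ≤ q) (hμκ : 2 * μ ^ 2 ≤ q ^ 2 * κ) (hℓ : ℓ ≤ 1 - q) (hpa : ‖a - p‖ ≤ ‖b - a‖)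
    (hangle : ⟪b - a, p - a⟫ ≤ (1 - κ) * (‖b - a‖ * ‖p - a‖))
    (hreg : ⟪b - p, a - p⟫ ≤ μ * (‖b - p‖ * ‖a - p‖)) :
    ‖a - p‖ ^ 2 + ℓ * ‖b - p‖ ^ 2 ≤ ‖b - a‖ ^ 2 := by
  rw [norm_sub_rev a p] at hpa hreg ⊢
  set r := ‖p - a‖
  set D := ‖b - p‖
  have hD : 2 * κ * r ^ 2 ≤ D ^ 2 := two_mul_mul_sq_le_norm_sub_sq hκ hpa hangle
  have hkey : 2 * μ * r ≤ q * D := by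
    refine (pow_le_pow_iff_left₀ (by positivity) (by positivity) two_ne_zero).mp ?_
    nlinarith [mul_le_mul_of_nonneg_left hD (sq_nonneg q), sq_nonneg r]
  have hsq : D ^ 2 = ‖b - a‖ ^ 2 - 2 * ⟪b - a, p - a⟫ + r ^ 2 := by
    rw [← norm_sub_sq_real, sub_sub_sub_cancel_right]
  have hinner : ⟪b - p, a - p⟫ = r ^ 2 - ⟪b - a, p - a⟫ := by
    rw [← sub_sub_sub_cancel_right b p a, ← neg_sub p a, inner_neg_right, inner_sub_left,
      real_inner_self_eq_norm_sq]
    ring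
  nlinarith [mul_le_mul_of_nonneg_right hkey (norm_nonneg (b - p)),
    mul_le_mul_of_nonneg_right hℓ (sq_nonneg D)]

end ThreePoint

theorem statement6_general {n : ℕ} (A B : Set (EuclideanSpace ℝ (Fin n)))
    (rstar γ ω c : ℝ) (hγ : 0 < γ)
    (hc1 : 0 < c)
    (b : EuclideanSpace ℝ (Fin n)) (hb : b ∈ B)
    (aplus : EuclideanSpace ℝ (Fin n)) (haplus : aplus ∈ projSet A b)
    (bplus : EuclideanSpace ℝ (Fin n)) (hbplus : bplus ∈ projSet B aplus)
    (hr : rstar < ‖aplus - bplus‖)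
    (hangle : γ ≤ (1 - cosAngle (b - aplus) (bplus - aplus)) / (‖aplus - bplus‖ - rstar) ^ ω)
    (hholder : ¬ ∃ b' ∈ B, ‖b' - aplus‖ ≤ (1 + c) * ‖aplus - bplus‖ ∧
        aplus ∈ projSet A b' ∧
        Real.sqrt c * (‖aplus - bplus‖ - rstar) ^ (ω/2) <
          cosAngle (b' - bplus) (aplus - bplus)) :
    ‖aplus - bplus‖^2 +
        min (min (1/2) (1 - Real.sqrt (2*c/γ))) (c/(2+c)) * ‖b - bplus‖^2
      ≤ ‖b - aplus‖^2 := by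
  rcases le_or_gt ‖b - aplus‖ ((1 + c) * ‖aplus - bplus‖) with hnear | hfar
  · have hpos : 0 < ‖aplus - bplus‖ - rstar := sub_pos.mpr hr
    set s := (‖aplus - bplus‖ - rstar) ^ ω
    have hs : 0 < s := Real.rpow_pos_of_pos hpos ω
    have hsqrt : ((‖aplus - bplus‖ - rstar) ^ (ω / 2)) ^ 2 = s := by
      rw [← Real.rpow_natCast, ← Real.rpow_mul hpos.le, Nat.cast_ofNat,
        div_mul_cancel₀ ω two_ne_zero]
    have hreg : cosAngle (b - bplus) (aplus - bplus) ≤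
        Real.sqrt c * (‖aplus - bplus‖ - rstar) ^ (ω / 2) :=
      not_lt.mp fun h => hholder ⟨b, hb, hnear, haplus, h⟩
    have hcos : cosAngle (b - aplus) (bplus - aplus) ≤ 1 - γ * s := by
      linarith [(le_div_iff₀ hs).mp hangle]
    refine three_point_of_inner_le (κ := γ * s) (by positivity) (by positivity)
      (Real.sqrt_nonneg _) ?_ ((min_le_left _ _).trans (min_le_right _ _)) ?_
      (inner_le_mul_of_cosAngle_le hcos) (inner_le_mul_of_cosAngle_le hreg)
    · rw [mul_pow, Real.sq_sqrt hc1.le, Real.sq_sqrt (by positivity), hsqrt]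
      apply le_of_eq
      field_simp
    · rw [norm_sub_rev b aplus]
      exact norm_sub_le_of_mem_projSet hbplus hb
  · exact three_point_of_le_one_add_mul hc1.le (min_le_right _ _) hfar.le

/-- Lemma 4 (three-point estimate). A building block `b → a⁺ → b⁺` with
`r = ‖a⁺ - b⁺‖ > r*` which satisfies the angle condition with constant `γ` and exponent `ω`
and the `ω/2`-Hölder regularity condition with constant `c < γ/2` satisfies
`‖a⁺ - b⁺‖² + ℓ ‖b - b⁺‖² ≤ ‖b - a⁺‖²` with `ℓ = min {1/2, 1 - √(2c/γ), c/(2+c)}`. -/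
theorem statement6 {n : ℕ} (A B : Set (EuclideanSpace ℝ (Fin n)))
    (hAne : A.Nonempty) (hAcl : IsClosed A) (hBne : B.Nonempty) (hBcl : IsClosed B)
    (rstar γ ω c : ℝ) (hrstar : 0 ≤ rstar) (hγ : 0 < γ) (hω1 : 0 ≤ ω) (hω2 : ω < 2)
    (hc1 : 0 < c) (hc2 : c < γ/2)
    (b : EuclideanSpace ℝ (Fin n)) (hb : b ∈ B)
    (aplus : EuclideanSpace ℝ (Fin n)) (haplus : aplus ∈ projSet A b)
    (bplus : EuclideanSpace ℝ (Fin n)) (hbplus : bplus ∈ projSet B aplus)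
    (hr : rstar < ‖aplus - bplus‖)
    (hangle : γ ≤ (1 - cosAngle (b - aplus) (bplus - aplus)) / (‖aplus - bplus‖ - rstar) ^ ω)
    (hholder : ¬ ∃ b' ∈ B, ‖b' - aplus‖ ≤ (1 + c) * ‖aplus - bplus‖ ∧
        aplus ∈ projSet A b' ∧
        Real.sqrt c * (‖aplus - bplus‖ - rstar) ^ (ω/2) <
          cosAngle (b' - bplus) (aplus - bplus)) :
    ‖aplus - bplus‖^2 +
        min (min (1/2) (1 - Real.sqrt (2*c/γ))) (c/(2+c)) * ‖b - bplus‖^2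
      ≤ ‖b - aplus‖^2 :=
  statement6_general A B rstar γ ω c hγ hc1 b hb aplus haplus bplus hbplus hr hangle hholder
end
end

section
/- Let A, B ⊆ ℝⁿ be nonempty closed sets and ℓ > 0. Let a ∈ A, b ∈ P_B(a), a⁺ ∈ P_A(b), b⁺ ∈ P_B(a⁺), and assume the three-point estimate ‖a⁺ − b⁺‖² + ℓ·‖b − b⁺‖² ≤ ‖b − a⁺‖² holds. Then the four-point estimate d_B(a)² − d_B(a⁺)² ≥ ℓ·‖b − b⁺‖² holds. -/
open Set Metric Filter Topology
open scoped RealInnerProductSpace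

noncomputable section

theorem infDist_le_infDist_of_mem_projSet {E : Type*} [NormedAddCommGroup E] {A B : Set E}
    {a b : E} (ha : a ∈ A) (hb : b ∈ projSet B a) : infDist b A ≤ infDist a B :=
  calc infDist b A ≤ dist b a := infDist_le_dist_of_mem ha
    _ = infDist a B := by rw [dist_comm, dist_eq_norm, hb.2]

theorem statement7_general {n : ℕ} (A B : Set (EuclideanSpace ℝ (Fin n)))
    (ℓ : ℝ)
    (a : EuclideanSpace ℝ (Fin n)) (ha : a ∈ A)
    (b : EuclideanSpace ℝ (Fin n)) (hb : b ∈ projSet B a)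
    (aplus : EuclideanSpace ℝ (Fin n)) (haplus : aplus ∈ projSet A b)
    (bplus : EuclideanSpace ℝ (Fin n)) (hbplus : bplus ∈ projSet B aplus)
    (hthree : ‖aplus - bplus‖^2 + ℓ * ‖b - bplus‖^2 ≤ ‖b - aplus‖^2) :
    ℓ * ‖b - bplus‖^2 ≤ (infDist a B)^2 - (infDist aplus B)^2 := by
  have hdist : infDist b A ^ 2 ≤ infDist a B ^ 2 :=
    pow_le_pow_left₀ infDist_nonneg (infDist_le_infDist_of_mem_projSet ha hb) 2
  rw [haplus.2] at hthree
  rw [← hbplus.2]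
  linarith

/-- the three-point estimate implies the four-point estimate
`d_B(a)² - d_B(a⁺)² ≥ ℓ ‖b - b⁺‖²` for a block `a → b → a⁺ → b⁺`. -/
theorem statement7 {n : ℕ} (A B : Set (EuclideanSpace ℝ (Fin n)))
    (hAne : A.Nonempty) (hAcl : IsClosed A) (hBne : B.Nonempty) (hBcl : IsClosed B)
    (ℓ : ℝ) (hℓ : 0 < ℓ)
    (a : EuclideanSpace ℝ (Fin n)) (ha : a ∈ A)
    (b : EuclideanSpace ℝ (Fin n)) (hb : b ∈ projSet B a)
    (aplus : EuclideanSpace ℝ (Fin n)) (haplus : aplus ∈ projSet A b)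
    (bplus : EuclideanSpace ℝ (Fin n)) (hbplus : bplus ∈ projSet B aplus)
    (hthree : ‖aplus - bplus‖^2 + ℓ * ‖b - bplus‖^2 ≤ ‖b - aplus‖^2) :
    ℓ * ‖b - bplus‖^2 ≤ (infDist a B)^2 - (infDist aplus B)^2 :=
  statement7_general A B ℓ a ha b hb aplus haplus bplus hbplus hthree
end
end

section
/- Let A, B ⊆ ℝⁿ be nonempty closed sets and (a_k, b_k) a bounded alternating sequence between A and B with gap (A*, B*, r*) and augmented sets A^s, B^s. Suppose there exists ℓ > 0 such that the four-point estimate d_B(a_k)² − d_B(a_{k+1})² ≥ ℓ·‖b_k − b_{k+1}‖² holds for all k, and suppose the gap satisfies the angle condition with some constant γ > 0 and some exponent ω ∈ [0, 2) with respect to A^s, B^s. Then (b_k) converges to some b* ∈ B, and there exists ρ > 0 with ‖b_k − b*‖ = O(k^{−ρ}). -/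
open Set Metric Filter Topology
open scoped RealInnerProductSpace

noncomputable section

/-- The proximal normal cone `N_A^p(a) = {λ u : λ ≥ 0, a ∈ P_A(a+u)}`. -/
def proxNormalCone {E : Type*} [NormedAddCommGroup E] [Module ℝ E] (A : Set E) (a : E) :
    Set E :=
  {v | ∃ lam : ℝ, 0 ≤ lam ∧ ∃ u : E, a ∈ projSet A (a + u) ∧ v = lam • u}

/-- A gap `(A*, B*, r*)` between `A` and `B`. -/
def IsGap {n : ℕ} (A B Astar Bstar : Set (EuclideanSpace ℝ (Fin n))) (rstar : ℝ) : Prop :=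
  Astar ⊆ A ∧ Bstar ⊆ B ∧ 0 ≤ rstar ∧
  (∀ astar ∈ Astar, ∃ bstar ∈ Bstar, bstar ∈ projSet B astar ∧ ‖astar - bstar‖ = rstar) ∧
  (∀ bstar ∈ Bstar, ∃ astar ∈ Astar, astar ∈ projSet A bstar ∧ ‖astar - bstar‖ = rstar)

/-- The angle condition with constant `γ` and exponent `ω` for the gap `(A*, B*, r*)`:
every prox-building block `b →p a⁺ → b⁺` with `a⁺` near `A*`, `b⁺` near `B*` and
`r = ‖a⁺ - b⁺‖ > r*` satisfies `(1 - cos α)/(r - r*)^ω ≥ γ`, `α = ∠(b - a⁺, b⁺ - a⁺)`. -/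
def AngleCond {n : ℕ} (A B Astar Bstar : Set (EuclideanSpace ℝ (Fin n)))
    (rstar γ ω : ℝ) : Prop :=
  ∃ U V : Set (EuclideanSpace ℝ (Fin n)), IsOpen U ∧ Bstar ⊆ U ∧ IsOpen V ∧ Astar ⊆ V ∧
    ∀ b ∈ B, ∀ aplus ∈ A, b - aplus ∈ proxNormalCone A aplus →
      ∀ bplus ∈ projSet B aplus, aplus ∈ V → bplus ∈ U → rstar < ‖aplus - bplus‖ →
      γ ≤ (1 - cosAngle (b - aplus) (bplus - aplus)) / (‖aplus - bplus‖ - rstar) ^ ω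

/-- The gap `(A*, B*, r*)` is `σ`-Hölder regular with constant `c`. -/
def HolderRegularGap {n : ℕ} (A B Astar : Set (EuclideanSpace ℝ (Fin n)))
    (rstar c σ : ℝ) : Prop :=
  ∃ V : Set (EuclideanSpace ℝ (Fin n)), IsOpen V ∧ Astar ⊆ V ∧ ∃ η > (0:ℝ),
    ∀ b ∈ B, ∀ aplus ∈ projSet A b, ∀ bplus ∈ projSet B aplus,
      aplus ∈ V → rstar < ‖aplus - bplus‖ → ‖aplus - bplus‖ < rstar + η →
      ¬ ∃ b' ∈ B, ‖b' - aplus‖ ≤ (1 + c) * ‖aplus - bplus‖ ∧ aplus ∈ projSet A b' ∧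
        Real.sqrt c * (‖aplus - bplus‖ - rstar) ^ σ < cosAngle (b' - bplus) (aplus - bplus)

/-- The gap is saturated: for every neighborhood `V` of `A*` there is a neighborhood `U` of
`B*` with `P_A(b) ⊆ V` for all `b ∈ B ∩ U`. -/
def SaturatedGap {n : ℕ} (A B Astar Bstar : Set (EuclideanSpace ℝ (Fin n))) : Prop :=
  ∀ V : Set (EuclideanSpace ℝ (Fin n)), IsOpen V → Astar ⊆ V →
    ∃ U : Set (EuclideanSpace ℝ (Fin n)), IsOpen U ∧ Bstar ⊆ U ∧
      ∀ b ∈ B ∩ U, projSet A b ⊆ V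

/-- An alternating sequence of projections between `A` and `B`. -/
def IsAltSeq {n : ℕ} (A B : Set (EuclideanSpace ℝ (Fin n)))
    (a b : ℕ → EuclideanSpace ℝ (Fin n)) : Prop :=
  (∀ k, a k ∈ A) ∧ (∀ k, b k ∈ projSet B (a k)) ∧ (∀ k, a (k+1) ∈ projSet A (b k))

/-- The alternating sequence reaches the `δ`-neighborhood of the gap `(A*, B*, r*)`. -/
def ReachesGap {n : ℕ} (Astar Bstar : Set (EuclideanSpace ℝ (Fin n))) (rstar δ : ℝ)
    (a b : ℕ → EuclideanSpace ℝ (Fin n)) : Prop :=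
  ∃ k : ℕ, infDist (b k) Bstar ≤ δ ∧ infDist (a (k+1)) Astar ≤ δ ∧
    rstar < ‖a k - b k‖ ∧ ‖a k - b k‖ < rstar + δ

/-- The set of accumulation points of a sequence. -/
def accPts {n : ℕ} (u : ℕ → EuclideanSpace ℝ (Fin n)) : Set (EuclideanSpace ℝ (Fin n)) :=
  {x | ∃ φ : ℕ → ℕ, StrictMono φ ∧ Tendsto (u ∘ φ) atTop (𝓝 x)}

/-!
Let `r_k = ‖a_k - b_k‖ = d_B(a_k)`, which decreases to `r*`, and `u_k = r_k² - r*²`. The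
four-point estimate gives `ℓ ‖b_k - b_{k+1}‖² ≤ u_k - u_{k+1}`. Near the gap the angle condition,
applied to the block `b_k → a_{k+1} → b_{k+1}` of projections onto the augmented sets, bounds
`‖b_k - b_{k+1}‖²` below by `2 γ r_{k+1}² (r_{k+1} - r*)^ω`, hence `u_k - u_{k+1} ≳ u_{k+1}^P`
for some `P ∈ (1, 2)`. This Łojasiewicz-type recursion forces `u_k = O(k^{-1/(P-1)})`. By
Cauchy–Schwarz the dyadic block `b_k, …, b_{2k}` then has length `O(√(k u_k)) = O(k^{-ρ})` with
`ρ = (2 - P)/(2(P - 1))`, and summing over dyadic blocks gives convergence with the same rate.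
-/

namespace Real

theorem sub_one_mul_rpow_neg_mul_sub_le {v w P : ℝ} (hv : 0 < v) (hvw : v ≤ w) (hP : 1 ≤ P) :
    (P - 1) * w ^ (-P) * (w - v) ≤ v ^ (1 - P) - w ^ (1 - P) := by
  have hw : 0 < w := hv.trans_le hvw
  have hbern : 1 + P * (w / v - 1) ≤ w ^ P * v ^ (-P) := by
    have h := one_add_mul_self_le_rpow_one_add (s := w / v - 1)
      (by linarith [div_nonneg hw.le hv.le]) hP
    rw [add_sub_cancel, div_rpow hw.le hv.le] at h
    rwa [rpow_neg hv.le, ← div_eq_mul_inv]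
  have hscaled : v + P * (w - v) ≤ v * v ^ (-P) * w ^ P := by
    calc v + P * (w - v) = v * (1 + P * (w / v - 1)) := by field_simp
      _ ≤ v * (w ^ P * v ^ (-P)) := mul_le_mul_of_nonneg_left hbern hv.le
      _ = v * v ^ (-P) * w ^ P := by ring
  have hww : w ^ P * w ^ (-P) = 1 := by rw [← rpow_add hw]; simp
  have hsplit : ∀ s : ℝ, 0 < s → s ^ (1 - P) = s * s ^ (-P) := fun s hs => by
    rw [sub_eq_add_neg, rpow_add hs, rpow_one]
  rw [hsplit v hv, hsplit w hw]
  have := mul_le_mul_of_nonneg_right hscaled (rpow_nonneg hw.le (-P))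
  rw [mul_assoc _ (w ^ P), hww, mul_one] at this
  linarith

theorem rpow_one_sub_add_le_of_mul_rpow_le_sub {x y c P δ : ℝ} (hy : 0 < y) (hyx : y ≤ x)
    (hP : 1 < P) (hc : 0 < c) (hdec : c * y ^ P ≤ x - y)
    (hδ₁ : δ ≤ (P - 1) * c * 2 ^ (-P)) (hδ₂ : δ ≤ (2 ^ (P - 1) - 1) * x ^ (1 - P)) :
    x ^ (1 - P) + δ ≤ y ^ (1 - P) := by
  have hx : 0 < x := hy.trans_le hyx
  -- tangent of `s ↦ s ^ (1 - P)` at `x` if `x ≤ 2y`, else `y ^ (1 - P) ≥ 2 ^ (P - 1) x ^ (1 - P)`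
  rcases le_or_gt x (2 * y) with hx2 | hx2
  · have htan := sub_one_mul_rpow_neg_mul_sub_le hy hyx hP.le
    have hratio : 2 ^ (-P) ≤ x ^ (-P) * y ^ P := by
      calc (2 : ℝ) ^ (-P) = 2⁻¹ ^ P := by rw [rpow_neg zero_le_two, inv_rpow zero_le_two]
        _ ≤ (y / x) ^ P :=
          rpow_le_rpow (by norm_num) (by rw [le_div_iff₀ hx]; linarith) (by linarith)
        _ = x ^ (-P) * y ^ P := by rw [div_rpow hy.le hx.le, rpow_neg hx.le]; ring
    have hxP : 0 ≤ x ^ (-P) := rpow_nonneg hx.le _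
    nlinarith [mul_le_mul_of_nonneg_left hdec (mul_nonneg (sub_nonneg.2 hP.le) hxP),
      mul_le_mul_of_nonneg_left hratio (mul_nonneg (sub_nonneg.2 hP.le) hc.le)]
  · have hhalf : (x / 2) ^ (1 - P) ≤ y ^ (1 - P) :=
      rpow_le_rpow_of_nonpos hy (by linarith) (by linarith)
    rw [div_rpow hx.le zero_le_two, div_eq_mul_inv, ← rpow_neg zero_le_two, neg_sub] at hhalf
    nlinarith

end Real

theorem exists_eventually_le_mul_rpow_of_mul_rpow_le_sub {u : ℕ → ℝ} {c P : ℝ} {K : ℕ}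
    (hu : ∀ k, 0 ≤ u k) (hanti : Antitone u) (hc : 0 < c) (hP : 1 < P)
    (hdec : ∀ j ≥ K, c * u (j + 1) ^ P ≤ u j - u (j + 1)) :
    ∃ C, ∀ᶠ k : ℕ in atTop, u k ≤ C * (k : ℝ) ^ (-(P - 1)⁻¹) := by
  by_cases hzero : ∃ k₀, u k₀ = 0
  · obtain ⟨k₀, hk₀⟩ := hzero
    exact ⟨0, eventually_atTop.2 ⟨k₀, fun k hk => by rw [zero_mul]; exact (hanti hk).trans hk₀.le⟩⟩
  simp only [not_exists] at hzero
  have hpos : ∀ k, 0 < u k := fun k => (hu k).lt_of_ne' (hzero k)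
  have h2P : 0 < (2 : ℝ) ^ (P - 1) - 1 := by
    linarith [Real.one_lt_rpow one_lt_two (by linarith : 0 < P - 1)]
  set δ := min ((P - 1) * c * 2 ^ (-P)) ((2 ^ (P - 1) - 1) * u K ^ (1 - P))
  have hδ : 0 < δ :=
    lt_min (by have := sub_pos.2 hP; positivity) (mul_pos h2P (Real.rpow_pos_of_pos (hpos K) _))
  have hgrowth : ∀ i : ℕ, u K ^ (1 - P) + δ * i ≤ u (K + i) ^ (1 - P) := by
    intro i
    induction i with
    | zero => simp
    | succ i ih =>
      have hmono : u K ^ (1 - P) ≤ u (K + i) ^ (1 - P) :=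
        Real.rpow_le_rpow_of_nonpos (hpos _) (hanti (Nat.le_add_right K i)) (by linarith)
      have hstep := Real.rpow_one_sub_add_le_of_mul_rpow_le_sub (δ := δ) (hpos (K + i + 1))
        (hanti (Nat.le_succ _)) hP hc (hdec (K + i) (Nat.le_add_right K i)) (min_le_left _ _)
        ((min_le_right _ _).trans (mul_le_mul_of_nonneg_left hmono h2P.le))
      push_cast
      rw [← add_assoc]
      linarith
  refine ⟨(δ / 2) ^ (-(P - 1)⁻¹), eventually_atTop.2 ⟨2 * K + 1, fun k hkN => ?_⟩⟩
  have hkK : K ≤ k := by omega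
  have hk : (0 : ℝ) < k := by exact_mod_cast (show 0 < k by omega)
  have hlin : δ / 2 * k ≤ u k ^ (1 - P) := by
    have h := hgrowth (k - K)
    rw [Nat.add_sub_cancel' hkK, Nat.cast_sub hkK] at h
    have h2K : (2 * K : ℝ) + 1 ≤ k := by exact_mod_cast hkN
    nlinarith [Real.rpow_nonneg (hu K) (1 - P)]
  have hinv : (u k ^ (1 - P)) ^ (-(P - 1)⁻¹) = u k := by
    rw [← Real.rpow_mul (hu k), show (1 - P) * -(P - 1)⁻¹ = 1 by
      field_simp [(sub_pos.2 hP).ne']; ring, Real.rpow_one]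
  calc u k = (u k ^ (1 - P)) ^ (-(P - 1)⁻¹) := hinv.symm
    _ ≤ (δ / 2 * k) ^ (-(P - 1)⁻¹) :=
      Real.rpow_le_rpow_of_nonpos (by positivity) hlin
        (neg_nonpos.2 (inv_nonneg.2 (by linarith)))
    _ = (δ / 2) ^ (-(P - 1)⁻¹) * (k : ℝ) ^ (-(P - 1)⁻¹) := Real.mul_rpow (by positivity) hk.le

theorem rpow_le_rpow_sub_mul_rpow {u S P Q : ℝ} (hu : 0 ≤ u) (huS : u ≤ S) (hQ : 0 < Q)
    (hQP : Q ≤ P) : u ^ P ≤ S ^ (P - Q) * u ^ Q := by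
  rw [← sub_add_cancel P Q, Real.rpow_add' hu (by linarith), add_sub_cancel_right]
  exact mul_le_mul_of_nonneg_right (Real.rpow_le_rpow hu huS (sub_nonneg.2 hQP))
    (Real.rpow_nonneg hu _)

theorem exists_eventually_mul_rpow_le_sub_of_le {u : ℕ → ℝ} {κ Q P : ℝ} (hu : ∀ k, 0 ≤ u k)
    (hanti : Antitone u) (hκ : 0 < κ) (hQ : 0 < Q) (hQP : Q ≤ P)
    (hdec : ∀ᶠ j in atTop, κ * u (j + 1) ^ Q ≤ u j - u (j + 1)) :
    ∃ c > 0, ∀ᶠ j in atTop, c * u (j + 1) ^ P ≤ u j - u (j + 1) := by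
  have hS : 0 < (u 0 + 1) ^ (P - Q) := Real.rpow_pos_of_pos (by linarith [hu 0]) _
  refine ⟨κ / (u 0 + 1) ^ (P - Q), div_pos hκ hS, ?_⟩
  filter_upwards [hdec] with j hj
  have hraise := rpow_le_rpow_sub_mul_rpow (hu (j + 1))
    ((hanti (Nat.zero_le (j + 1))).trans (lt_add_one _).le) hQ hQP
  calc κ / (u 0 + 1) ^ (P - Q) * u (j + 1) ^ P
      ≤ κ / (u 0 + 1) ^ (P - Q) * ((u 0 + 1) ^ (P - Q) * u (j + 1) ^ Q) := by gcongr
    _ = κ * u (j + 1) ^ Q := by field_simp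
    _ ≤ u j - u (j + 1) := hj

theorem sq_sub_sq_rpow_le {r s ω : ℝ} (hs : 0 ≤ s) (hsr : s ≤ r) (hω₀ : 0 ≤ ω) (hω₂ : ω ≤ 2) :
    (r ^ 2 - s ^ 2) ^ (1 + ω / 2) ≤ 2 ^ ω * r ^ 2 * (r - s) ^ ω := by
  have hr : 0 ≤ r := hs.trans hsr
  have hu : 0 ≤ r ^ 2 - s ^ 2 := by nlinarith
  have hsplit : (r ^ 2 - s ^ 2) ^ (1 + ω / 2)
      = (r ^ 2 - s ^ 2) ^ ω * (r ^ 2 - s ^ 2) ^ (1 - ω / 2) := by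
    rw [← Real.rpow_add' hu (by linarith)]; ring_nf
  have hfirst : (r ^ 2 - s ^ 2) ^ ω ≤ 2 ^ ω * (r - s) ^ ω * r ^ ω := by
    rw [← Real.mul_rpow zero_le_two (by linarith), ← Real.mul_rpow (by positivity) hr]
    exact Real.rpow_le_rpow hu (by nlinarith) hω₀
  have hsecond : (r ^ 2 - s ^ 2) ^ (1 - ω / 2) ≤ r ^ (2 - ω) := by
    calc (r ^ 2 - s ^ 2) ^ (1 - ω / 2) ≤ (r ^ 2) ^ (1 - ω / 2) :=
          Real.rpow_le_rpow hu (by nlinarith) (by linarith)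
      _ = r ^ (2 - ω) := by
          rw [← Real.rpow_natCast, ← Real.rpow_mul hr]; push_cast; ring_nf
  have hr2 : r ^ ω * r ^ (2 - ω) = r ^ 2 := by
    rw [← Real.rpow_add' hr (by norm_num), add_sub_cancel, Real.rpow_two]
  rw [hsplit]
  calc _ ≤ 2 ^ ω * (r - s) ^ ω * r ^ ω * r ^ (2 - ω) :=
        mul_le_mul hfirst hsecond (Real.rpow_nonneg hu _) (by positivity)
    _ = 2 ^ ω * r ^ 2 * (r - s) ^ ω := by rw [← hr2]; ring

theorem exists_forall_le_mul_rpow_of_eventually {f : ℕ → ℝ} {M E ρ : ℝ} (hM : ∀ k, f k ≤ M)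
    (hρ : 0 ≤ ρ) (hf : ∀ᶠ k : ℕ in atTop, f k ≤ E * (k : ℝ) ^ (-ρ)) :
    ∃ C, ∀ k : ℕ, 1 ≤ k → f k ≤ C * (k : ℝ) ^ (-ρ) := by
  obtain ⟨K, hK⟩ := eventually_atTop.1 (hf.and (eventually_ge_atTop 1))
  refine ⟨max E 0 + max M 0 * (K : ℝ) ^ ρ, fun k hk => ?_⟩
  have hk : (0 : ℝ) < k := by exact_mod_cast hk
  have hkρ : 0 ≤ (k : ℝ) ^ (-ρ) := Real.rpow_nonneg hk.le _
  have hKρ : 0 ≤ max M 0 * (K : ℝ) ^ ρ * (k : ℝ) ^ (-ρ) := by positivity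
  rcases le_or_gt K k with hKk | hkK
  · calc f k ≤ E * (k : ℝ) ^ (-ρ) := (hK k hKk).1
      _ ≤ max E 0 * (k : ℝ) ^ (-ρ) := by gcongr; exact le_max_left _ _
      _ ≤ _ := by nlinarith
  · have hratio : 1 ≤ (K : ℝ) ^ ρ * (k : ℝ) ^ (-ρ) := by
      rw [Real.rpow_neg hk.le, ← div_eq_mul_inv, ← Real.div_rpow (Nat.cast_nonneg K) hk.le]
      exact Real.one_le_rpow ((one_le_div hk).2 (by exact_mod_cast hkK.le)) hρ
    calc f k ≤ max M 0 := (hM k).trans (le_max_left _ _)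
      _ ≤ max M 0 * ((K : ℝ) ^ ρ * (k : ℝ) ^ (-ρ)) :=
          le_mul_of_one_le_right (le_max_right _ _) hratio
      _ ≤ _ := by nlinarith [mul_nonneg (le_max_right E 0) hkρ]

section MetricSequences

variable {X : Type*} [PseudoMetricSpace X] {b : ℕ → X}

theorem dist_add_le_sqrt_of_sq_dist_le_sub {u : ℕ → ℝ} {ℓ : ℝ} (hℓ : 0 < ℓ)
    (hu : ∀ k, 0 ≤ u k) (hstep : ∀ j, ℓ * dist (b j) (b (j + 1)) ^ 2 ≤ u j - u (j + 1))
    (k i : ℕ) : dist (b k) (b (k + i)) ≤ √(i * u k / ℓ) := by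
  have hsq : (∑ j ∈ Finset.range i, dist (b (k + j)) (b (k + j + 1))) ^ 2 ≤ i * u k / ℓ := by
    calc _ ≤ (Finset.range i).card * ∑ j ∈ Finset.range i, dist (b (k + j)) (b (k + j + 1)) ^ 2 :=
          sq_sum_le_card_mul_sum_sq
      _ ≤ i * ∑ j ∈ Finset.range i, (u (k + j) - u (k + j + 1)) / ℓ := by
          rw [Finset.card_range]
          gcongr with j
          rw [le_div_iff₀ hℓ]
          linarith [hstep (k + j)]
      _ = i * ((u k - u (k + i)) / ℓ) := by
          have htel := Finset.sum_range_sub' (fun j => u (k + j)) i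
          simp only [← add_assoc, add_zero] at htel
          rw [← Finset.sum_div, htel]
      _ ≤ i * u k / ℓ := by
          rw [mul_div_assoc]
          gcongr
          linarith [hu (k + i)]
  exact (dist_le_range_sum_dist (fun j => b (k + j)) i).trans (Real.le_sqrt_of_sq_le hsq)

theorem antitone_of_mul_sq_dist_le_sub {u : ℕ → ℝ} {ℓ : ℝ} (hℓ : 0 ≤ ℓ)
    (hstep : ∀ j, ℓ * dist (b j) (b (j + 1)) ^ 2 ≤ u j - u (j + 1)) : Antitone u :=
  antitone_nat_of_succ_le fun j => by
    linarith [hstep j, mul_nonneg hℓ (sq_nonneg (dist (b j) (b (j + 1))))]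

theorem dist_le_of_dist_le_on_dyadic_blocks {B ρ : ℝ} {K : ℕ} (hK : 0 < K) (hρ : 0 < ρ)
    (hB : 0 ≤ B) (hblock : ∀ k ≥ K, ∀ i ≤ k, dist (b k) (b (k + i)) ≤ B * (k : ℝ) ^ (-ρ)) :
    ∀ k ≥ K, ∀ i, dist (b k) (b (k + i)) ≤ B / (1 - 2 ^ (-ρ)) * (k : ℝ) ^ (-ρ) := by
  have h2ρ : (2 : ℝ) ^ (-ρ) < 1 := Real.rpow_lt_one_of_one_lt_of_neg one_lt_two (by linarith)
  set E := B / (1 - 2 ^ (-ρ))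
  have hE : B + E * 2 ^ (-ρ) = E := by
    simp only [E]
    field_simp [(sub_pos.2 h2ρ).ne']
    ring
  have hBE : B ≤ E := by
    have : 0 ≤ E * 2 ^ (-ρ) := mul_nonneg (div_nonneg hB (sub_pos.2 h2ρ).le) (by positivity)
    linarith
  intro k hk i
  induction i using Nat.strong_induction_on generalizing k with
  | _ i ih =>
    rcases le_or_gt i k with hik | hki
    · exact (hblock k hk i hik).trans (by gcongr)
    · have hfirst := hblock k hk k le_rfl
      have hrest := ih (i - k) (by omega) (k + k) (by omega)
      rw [show k + k + (i - k) = k + i by omega] at hrest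
      have hk2 : ((k + k : ℕ) : ℝ) ^ (-ρ) = 2 ^ (-ρ) * (k : ℝ) ^ (-ρ) := by
        push_cast
        rw [← two_mul, Real.mul_rpow zero_le_two (Nat.cast_nonneg k)]
      rw [hk2] at hrest
      calc dist (b k) (b (k + i)) ≤ dist (b k) (b (k + k)) + dist (b (k + k)) (b (k + i)) :=
            dist_triangle _ _ _
        _ ≤ B * (k : ℝ) ^ (-ρ) + E * (2 ^ (-ρ) * (k : ℝ) ^ (-ρ)) := add_le_add hfirst hrest
        _ = E * (k : ℝ) ^ (-ρ) := by linear_combination (k : ℝ) ^ (-ρ) * hE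

theorem exists_tendsto_dist_le_of_forall_dist_add_le [CompleteSpace X] {f : ℕ → ℝ} {K : ℕ}
    (hf : Tendsto f atTop (𝓝 0)) (hb : ∀ k ≥ K, ∀ i, dist (b k) (b (k + i)) ≤ f k) :
    ∃ x, Tendsto b atTop (𝓝 x) ∧ ∀ k ≥ K, dist (b k) x ≤ f k := by
  have hcauchy : CauchySeq b := by
    rw [Metric.cauchySeq_iff']
    intro ε hε
    obtain ⟨N, hN⟩ := eventually_atTop.1 ((hf.eventually (gt_mem_nhds hε)).and
      (eventually_ge_atTop K))
    refine ⟨N, fun k hk => ?_⟩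
    obtain ⟨hfN, hKN⟩ := hN N le_rfl
    rw [dist_comm, ← Nat.add_sub_cancel' hk]
    exact (hb N hKN (k - N)).trans_lt hfN
  obtain ⟨x, hx⟩ := cauchySeq_tendsto_of_complete hcauchy
  refine ⟨x, hx, fun k hk => le_of_tendsto' (tendsto_const_nhds.dist
    (hx.comp (tendsto_add_atTop_nat k))) fun i => ?_⟩
  simpa [add_comm] using hb k hk i

theorem exists_tendsto_rate_of_sufficient_decrease [CompleteSpace X] {u : ℕ → ℝ} {ℓ c P : ℝ}
    {K : ℕ} (hℓ : 0 < ℓ) (hc : 0 < c) (hP₁ : 1 < P) (hP₂ : P < 2) (hu : ∀ k, 0 ≤ u k)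
    (hstep : ∀ j, ℓ * dist (b j) (b (j + 1)) ^ 2 ≤ u j - u (j + 1))
    (hdec : ∀ j ≥ K, c * u (j + 1) ^ P ≤ u j - u (j + 1)) :
    ∃ x, Tendsto b atTop (𝓝 x) ∧
      ∃ ρ : ℝ, 0 < ρ ∧ ∃ E, ∀ᶠ k : ℕ in atTop, dist (b k) x ≤ E * (k : ℝ) ^ (-ρ) := by
  obtain ⟨C, hC⟩ := exists_eventually_le_mul_rpow_of_mul_rpow_le_sub hu
    (antitone_of_mul_sq_dist_le_sub hℓ.le hstep) hc hP₁ hdec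
  obtain ⟨K₀, hK₀⟩ := eventually_atTop.1 (hC.and (eventually_ge_atTop 1))
  set m := (P - 1)⁻¹
  have hm : 1 < m := (one_lt_inv₀ (by linarith)).2 (by linarith)
  set ρ := (m - 1) / 2
  have hρ : 0 < ρ := by simp only [ρ]; linarith
  -- `i ≤ k` steps have length `≤ √(k u_k / ℓ)`, and `k u_k ≲ k ^ (1 - m) = (k ^ (-ρ)) ^ 2`
  have hblock : ∀ k ≥ K₀, ∀ i ≤ k, dist (b k) (b (k + i)) ≤ √(C / ℓ) * (k : ℝ) ^ (-ρ) := by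
    intro k hk i hik
    have hk1 : (0 : ℝ) < k := by exact_mod_cast (hK₀ k hk).2
    have hpow : (k : ℝ) * (k : ℝ) ^ (-m) = ((k : ℝ) ^ (-ρ)) ^ 2 := by
      rw [← Real.rpow_natCast, ← Real.rpow_mul hk1.le, ← Real.rpow_one_add' hk1.le (by linarith)]
      congr 1
      simp only [ρ]
      push_cast
      ring
    have hsq : i * u k / ℓ ≤ C / ℓ * ((k : ℝ) ^ (-ρ)) ^ 2 := by
      rw [← hpow, div_mul_eq_mul_div, div_le_div_iff_of_pos_right hℓ]
      calc (i : ℝ) * u k ≤ k * (C * (k : ℝ) ^ (-m)) :=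
            mul_le_mul (by exact_mod_cast hik) (hK₀ k hk).1 (hu k) (Nat.cast_nonneg k)
        _ = C * (k * (k : ℝ) ^ (-m)) := by ring
    calc dist (b k) (b (k + i)) ≤ √(i * u k / ℓ) :=
          dist_add_le_sqrt_of_sq_dist_le_sub hℓ hu hstep k i
      _ ≤ √(C / ℓ * ((k : ℝ) ^ (-ρ)) ^ 2) := Real.sqrt_le_sqrt hsq
      _ = √(C / ℓ) * (k : ℝ) ^ (-ρ) := by
          rw [Real.sqrt_mul' _ (sq_nonneg _), Real.sqrt_sq (by positivity)]
  have hK₀pos : 0 < K₀ := (hK₀ K₀ le_rfl).2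
  have hrate := dist_le_of_dist_le_on_dyadic_blocks hK₀pos hρ (Real.sqrt_nonneg _) hblock
  have hlim : Tendsto (fun k : ℕ => √(C / ℓ) / (1 - 2 ^ (-ρ)) * (k : ℝ) ^ (-ρ)) atTop (𝓝 0) := by
    simpa using ((tendsto_rpow_neg_atTop hρ).comp tendsto_natCast_atTop_atTop).const_mul
      (√(C / ℓ) / (1 - 2 ^ (-ρ)))
  obtain ⟨x, hx, hxrate⟩ := exists_tendsto_dist_le_of_forall_dist_add_le hlim hrate
  exact ⟨x, hx, ρ, hρ, _, eventually_atTop.2 ⟨K₀, hxrate⟩⟩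

end MetricSequences

section Projections

variable {E : Type*} [NormedAddCommGroup E] {A S : Set E} {x a : E}

theorem mem_projSet_of_subset_closure (ha : a ∈ projSet A x) (haS : a ∈ S)
    (hS : S ⊆ closure A) : a ∈ projSet S x := by
  refine ⟨haS, le_antisymm ?_ ?_⟩
  · rw [ha.2, ← infDist_closure]
    exact infDist_le_infDist_of_subset hS ⟨a, haS⟩
  · rw [← dist_eq_norm]
    exact infDist_le_dist_of_mem haS

theorem sub_mem_proxNormalCone [Module ℝ E] (ha : a ∈ projSet A x) :
    x - a ∈ proxNormalCone A a :=
  ⟨1, zero_le_one, x - a, by rwa [add_sub_cancel], (one_smul ℝ _).symm⟩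

end Projections

theorem cosAngle_le_one {n : ℕ} (x y : EuclideanSpace ℝ (Fin n)) : cosAngle x y ≤ 1 := by
  unfold cosAngle
  rcases eq_or_lt_of_le (mul_nonneg (norm_nonneg x) (norm_nonneg y)) with h | h
  · rw [← h, div_zero]; exact zero_le_one
  · exact (div_le_one h).2 (real_inner_le_norm x y)

theorem two_mul_sq_mul_one_sub_cosAngle_le {n : ℕ} {x y : EuclideanSpace ℝ (Fin n)}
    (hyx : ‖y‖ ≤ ‖x‖) : 2 * ‖y‖ ^ 2 * (1 - cosAngle x y) ≤ ‖x - y‖ ^ 2 := by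
  rcases eq_or_ne y 0 with rfl | hy
  · simp
  have hx : x ≠ 0 := by
    rintro rfl
    rw [norm_zero] at hyx
    exact hy (norm_le_zero_iff.1 hyx)
  have hinner : ⟪x, y⟫ = ‖x‖ * ‖y‖ * cosAngle x y := by
    unfold cosAngle; field_simp [norm_ne_zero_iff.2 hx, norm_ne_zero_iff.2 hy]
  have hcos := sub_nonneg.2 (cosAngle_le_one x y)
  rw [norm_sub_sq_real, hinner]
  nlinarith [mul_le_mul_of_nonneg_right (mul_le_mul_of_nonneg_left hyx (norm_nonneg y)) hcos,
    sq_nonneg (‖x‖ - ‖y‖)]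

theorem mul_rpow_sq_sub_sq_le_of_angle_bound {n : ℕ} {x y : EuclideanSpace ℝ (Fin n)}
    {rs γ ω ℓ D : ℝ} (hrs₀ : 0 ≤ rs) (hrs : rs ≤ ‖y‖) (hyx : ‖y‖ ≤ ‖x‖) (hℓ : 0 ≤ ℓ)
    (hγ : 0 ≤ γ) (hω₀ : 0 ≤ ω) (hω₂ : ω ≤ 2)
    (hangle : rs < ‖y‖ → γ ≤ (1 - cosAngle x y) / (‖y‖ - rs) ^ ω)
    (hD : ℓ * ‖x - y‖ ^ 2 ≤ D) :
    2 * ℓ * γ / 2 ^ ω * (‖y‖ ^ 2 - rs ^ 2) ^ (1 + ω / 2) ≤ D := by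
  have hD₀ : 0 ≤ D := (mul_nonneg hℓ (sq_nonneg _)).trans hD
  rcases hrs.eq_or_lt with heq | hlt
  · rwa [heq, sub_self, Real.zero_rpow (by linarith), mul_zero]
  have hcos : γ * (‖y‖ - rs) ^ ω ≤ 1 - cosAngle x y :=
    (le_div_iff₀ (Real.rpow_pos_of_pos (sub_pos.2 hlt) ω)).1 (hangle hlt)
  have hgeom := two_mul_sq_mul_one_sub_cosAngle_le hyx
  have hpow := sq_sub_sq_rpow_le hrs₀ hrs hω₀ hω₂
  rw [div_mul_eq_mul_div, div_le_iff₀ (by positivity)]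
  calc 2 * ℓ * γ * (‖y‖ ^ 2 - rs ^ 2) ^ (1 + ω / 2)
      ≤ 2 * ℓ * γ * (2 ^ ω * ‖y‖ ^ 2 * (‖y‖ - rs) ^ ω) := by gcongr
    _ = ℓ * (2 * ‖y‖ ^ 2 * (γ * (‖y‖ - rs) ^ ω)) * 2 ^ ω := by ring
    _ ≤ ℓ * (2 * ‖y‖ ^ 2 * (1 - cosAngle x y)) * 2 ^ ω := by gcongr
    _ ≤ ℓ * ‖x - y‖ ^ 2 * 2 ^ ω := by gcongr
    _ ≤ D * 2 ^ ω := by gcongr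

section AccumulationPoints

variable {n : ℕ} {u : ℕ → EuclideanSpace ℝ (Fin n)}

theorem range_union_accPts_subset_closure {A : Set (EuclideanSpace ℝ (Fin n))}
    (hu : ∀ k, u k ∈ A) : range u ∪ accPts u ⊆ closure A := by
  rintro x (⟨k, rfl⟩ | ⟨φ, -, hφ⟩)
  · exact subset_closure (hu k)
  · exact mem_closure_of_tendsto hφ (Eventually.of_forall fun k => hu (φ k))

theorem eventually_mem_of_accPts_subset {M : ℝ} (hM : ∀ k, ‖u k‖ ≤ M)
    {V : Set (EuclideanSpace ℝ (Fin n))} (hV : IsOpen V) (hsub : accPts u ⊆ V) :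
    ∀ᶠ k in atTop, u k ∈ V := by
  by_contra h
  obtain ⟨φ, hφ, hφV⟩ := extraction_of_frequently_atTop (not_eventually.1 h)
  have hbdd : Bornology.IsBounded (range u) :=
    isBounded_iff_forall_norm_le.2 ⟨M, by rintro _ ⟨k, rfl⟩; exact hM k⟩
  obtain ⟨x, -, ψ, hψ, hx⟩ := tendsto_subseq_of_bounded hbdd fun k => mem_range_self (φ k)
  exact hV.isClosed_compl.mem_of_tendsto hx (Eventually.of_forall fun k => hφV (ψ k))
    (hsub ⟨φ ∘ ψ, hφ.comp hψ, hx⟩)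

end AccumulationPoints

namespace IsAltSeq

variable {n : ℕ} {A B : Set (EuclideanSpace ℝ (Fin n))} {a b : ℕ → EuclideanSpace ℝ (Fin n)}

theorem norm_succ_sub_le (h : IsAltSeq A B a b) (k : ℕ) :
    ‖b (k + 1) - a (k + 1)‖ ≤ ‖b k - a (k + 1)‖ := by
  rw [norm_sub_rev, (h.2.1 (k + 1)).2, norm_sub_rev, ← dist_eq_norm]
  exact infDist_le_dist_of_mem (h.2.1 k).1

theorem eventually_angle_bound (h : IsAltSeq A B a b) {M : ℝ} (hMa : ∀ k, ‖a k‖ ≤ M)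
    (hMb : ∀ k, ‖b k‖ ≤ M) {rs γ ω : ℝ}
    (hangle : AngleCond (range a ∪ accPts a) (range b ∪ accPts b) (accPts a) (accPts b) rs γ ω) :
    ∀ᶠ j in atTop, rs < ‖b (j + 1) - a (j + 1)‖ →
      γ ≤ (1 - cosAngle (b j - a (j + 1)) (b (j + 1) - a (j + 1))) /
        (‖b (j + 1) - a (j + 1)‖ - rs) ^ ω := by
  obtain ⟨U, V, hU, hBU, hV, hAV, hcond⟩ := hangle
  have hAs := range_union_accPts_subset_closure h.1
  have hBs := range_union_accPts_subset_closure fun k => (h.2.1 k).1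
  filter_upwards [(tendsto_add_atTop_nat 1).eventually (eventually_mem_of_accPts_subset hMa hV hAV),
    (tendsto_add_atTop_nat 1).eventually (eventually_mem_of_accPts_subset hMb hU hBU)]
    with j haV hbU hgap
  rw [norm_sub_rev] at hgap ⊢
  exact hcond (b j) (.inl ⟨j, rfl⟩) (a (j + 1)) (.inl ⟨j + 1, rfl⟩)
    (sub_mem_proxNormalCone (mem_projSet_of_subset_closure (h.2.2 j) (.inl ⟨j + 1, rfl⟩) hAs))
    (b (j + 1)) (mem_projSet_of_subset_closure (h.2.1 (j + 1)) (.inl ⟨j + 1, rfl⟩) hBs)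
    haV hbU hgap

theorem eventually_mul_rpow_le_sub (h : IsAltSeq A B a b) {M : ℝ} (hMa : ∀ k, ‖a k‖ ≤ M)
    (hMb : ∀ k, ‖b k‖ ≤ M) {rs ℓ γ ω : ℝ} (hrs₀ : 0 ≤ rs) (hrs : ∀ k, rs ≤ ‖b k - a k‖)
    (hℓ : 0 ≤ ℓ) (hγ : 0 ≤ γ) (hω₀ : 0 ≤ ω) (hω₂ : ω ≤ 2)
    (hfour : ∀ j, ℓ * ‖b j - b (j + 1)‖ ^ 2 ≤ ‖b j - a j‖ ^ 2 - ‖b (j + 1) - a (j + 1)‖ ^ 2)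
    (hangle : AngleCond (range a ∪ accPts a) (range b ∪ accPts b) (accPts a) (accPts b) rs γ ω) :
    ∀ᶠ j in atTop, 2 * ℓ * γ / 2 ^ ω * (‖b (j + 1) - a (j + 1)‖ ^ 2 - rs ^ 2) ^ (1 + ω / 2) ≤
      (‖b j - a j‖ ^ 2 - rs ^ 2) - (‖b (j + 1) - a (j + 1)‖ ^ 2 - rs ^ 2) := by
  filter_upwards [h.eventually_angle_bound hMa hMb hangle] with j hj
  refine mul_rpow_sq_sub_sq_le_of_angle_bound hrs₀ (hrs _) (h.norm_succ_sub_le j) hℓ hγ hω₀ hω₂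
    hj ?_
  rw [sub_sub_sub_cancel_right, sub_sub_sub_cancel_right]
  exact hfour j

end IsAltSeq

theorem statement13_general {n : ℕ} (A B : Set (EuclideanSpace ℝ (Fin n)))
    (hBcl : IsClosed B)
    (a b : ℕ → EuclideanSpace ℝ (Fin n))
    (hseq : IsAltSeq A B a b)
    (hbdd : ∃ M : ℝ, ∀ k, ‖a k‖ ≤ M ∧ ‖b k‖ ≤ M)
    (ℓ : ℝ) (hℓ : 0 < ℓ)
    (hfour : ∀ k, ℓ * ‖b k - b (k+1)‖^2 ≤ (infDist (a k) B)^2 - (infDist (a (k+1)) B)^2)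
    (γ ω : ℝ) (hγ : 0 < γ) (hω1 : 0 ≤ ω) (hω2 : ω < 2)
    (hangle : AngleCond (Set.range a ∪ accPts a) (Set.range b ∪ accPts b)
      (accPts a) (accPts b) (⨅ k, ‖a k - b k‖) γ ω) :
    ∃ bstar ∈ B, Tendsto b atTop (𝓝 bstar) ∧
      ∃ ρ : ℝ, 0 < ρ ∧ ∃ C : ℝ, ∀ k : ℕ, 1 ≤ k →
        ‖b k - bstar‖ ≤ C * (k : ℝ) ^ (-ρ) := by
  obtain ⟨M, hM⟩ := hbdd
  set rs := ⨅ k, ‖a k - b k‖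
  have hrs₀ : 0 ≤ rs := le_ciInf fun k => norm_nonneg _
  have hrs : ∀ k, rs ≤ ‖b k - a k‖ := fun k =>
    norm_sub_rev (a k) (b k) ▸ ciInf_le ⟨0, by rintro _ ⟨k, rfl⟩; exact norm_nonneg _⟩ k
  have hfour' : ∀ j, ℓ * ‖b j - b (j + 1)‖ ^ 2 ≤ ‖b j - a j‖ ^ 2 - ‖b (j + 1) - a (j + 1)‖ ^ 2 := by
    simpa only [← (hseq.2.1 _).2, norm_sub_rev (a _)] using hfour
  set u : ℕ → ℝ := fun k => ‖b k - a k‖ ^ 2 - rs ^ 2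
  have hu : ∀ k, 0 ≤ u k := fun k => sub_nonneg.2 (pow_le_pow_left₀ hrs₀ (hrs k) 2)
  have hstep : ∀ j, ℓ * dist (b j) (b (j + 1)) ^ 2 ≤ u j - u (j + 1) := fun j => by
    simp only [u, dist_eq_norm]
    linarith [hfour' j]
  have hdecQ := hseq.eventually_mul_rpow_le_sub (fun k => (hM k).1) (fun k => (hM k).2) hrs₀ hrs
    hℓ.le hγ.le hω1 hω2.le hfour' hangle
  -- any `P ∈ (1, 2)` with `1 + ω / 2 ≤ P` will do
  obtain ⟨c, hc, hdec⟩ := exists_eventually_mul_rpow_le_sub_of_le (P := (ω + 6) / 4) hu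
    (antitone_of_mul_sq_dist_le_sub hℓ.le hstep) (by positivity) (by linarith) (by linarith) hdecQ
  obtain ⟨K, hK⟩ := eventually_atTop.1 hdec
  obtain ⟨bstar, hlim, ρ, hρ, E, hE⟩ := exists_tendsto_rate_of_sufficient_decrease hℓ hc
    (by linarith) (by linarith) hu hstep hK
  refine ⟨bstar, hBcl.mem_of_tendsto hlim (Eventually.of_forall fun k => (hseq.2.1 k).1), hlim,
    ρ, hρ, exists_forall_le_mul_rpow_of_eventually (M := M + ‖bstar‖) (fun k => ?_) hρ.le
    (by simpa only [dist_eq_norm] using hE)⟩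
  exact (norm_sub_le _ _).trans (by linarith [(hM k).2])

/-- Corollary 7. If a bounded alternating sequence satisfies the four-point
estimate with some `ℓ > 0` and its gap satisfies the angle condition with respect to the
augmented sets `A^s, B^s`, then `b_k → b* ∈ B` with speed `O(k^{-ρ})` for some `ρ > 0`. -/
theorem statement13 {n : ℕ} (A B : Set (EuclideanSpace ℝ (Fin n)))
    (hAne : A.Nonempty) (hAcl : IsClosed A) (hBne : B.Nonempty) (hBcl : IsClosed B)
    (a b : ℕ → EuclideanSpace ℝ (Fin n))
    (hseq : IsAltSeq A B a b)
    (hbdd : ∃ M : ℝ, ∀ k, ‖a k‖ ≤ M ∧ ‖b k‖ ≤ M)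
    (ℓ : ℝ) (hℓ : 0 < ℓ)
    (hfour : ∀ k, ℓ * ‖b k - b (k+1)‖^2 ≤ (infDist (a k) B)^2 - (infDist (a (k+1)) B)^2)
    (γ ω : ℝ) (hγ : 0 < γ) (hω1 : 0 ≤ ω) (hω2 : ω < 2)
    (hangle : AngleCond (Set.range a ∪ accPts a) (Set.range b ∪ accPts b)
      (accPts a) (accPts b) (⨅ k, ‖a k - b k‖) γ ω) :
    ∃ bstar ∈ B, Tendsto b atTop (𝓝 bstar) ∧
      ∃ ρ : ℝ, 0 < ρ ∧ ∃ C : ℝ, ∀ k : ℕ, 1 ≤ k →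
        ‖b k - bstar‖ ≤ C * (k : ℝ) ^ (-ρ) :=
  statement13_general A B hBcl a b hseq hbdd ℓ hℓ hfour γ ω hγ hω1 hω2 hangle
end
end

section
/- (Reach of the magnitude torus.) Let N ≥ 1, m : Fin N → ℝ with m(ω) > 0 for all ω, ‖m‖ = (Σ_ω m(ω)²)^{1/2}, and T = {y ∈ ℂ^N : |y(ω)| = m(ω) for all ω} ⊆ ℂ^N with the Euclidean norm. Let y ∈ T, let ε : Fin N → {−1, +1}, and let d ∈ ℂ^N be the unit vector with d(ω) = ε(ω)·y(ω)/‖m‖. Then: (i) for every R with 0 ≤ R < ‖m‖, y is the unique nearest point of T to y + R·d, i.e. P_T(y + R·d) = {y}; (ii) if ε(ω) = +1 for all ω, then P_T(y + R·d) = {y} for every R ≥ 0, so the reach R(y, d) = sup{R ≥ 0 : P_T(y + R·d) = {y}} is +∞; (iii) if ε(ω₀) = −1 for some ω₀, then the point y + ‖m‖·d has more than one nearest point in T, and R(y, d) = ‖m‖. -/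
/-
The torus `T` is a product of circles, so the distance to it splits over coordinates,
`dist(x, T)² = ∑ ω (‖x ω‖ - m ω)²`, and `z ∈ T` is a nearest point of `x` iff every `z ω` is a
nearest point of its circle to `x ω`, i.e. lies on the ray through `x ω` (strict convexity of `ℂ`),
any point of the circle being nearest when `x ω = 0`. Along the normal ray,
`(y + R d) ω = (1 + R ε ω / ‖m‖) y ω`: as long as all these coefficients are positive the
projection is `{y}`, and once the coefficient of a coordinate with `ε ω = -1` vanishes, at
`R = ‖m‖`, flipping the sign of those coordinates of `y` gives a second nearest point.
-/

open Set Metric Filter Topology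

noncomputable section

/-- The reach of `S` at `b` along a unit direction `d`:
`R(b,d) = sup {R ≥ 0 : P_S(b + R d) = {b}}`, as an extended real number. -/
def dirReach {E : Type*} [NormedAddCommGroup E] [Module ℝ E]
    (S : Set E) (b d : E) : EReal :=
  sSup (Real.toEReal '' {R : ℝ | 0 ≤ R ∧ projSet S (b + R • d) = {b}})

/-- The Fourier magnitude set `T = {y ∈ ℂ^N : |y(ω)| = m(ω) for all ω}`. -/
def magSet (N : ℕ) (m : Fin N → ℝ) : Set (EuclideanSpace ℂ (Fin N)) :=
  {y | ∀ ω, ‖y ω‖ = m ω}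

theorem SameRay.eq_of_pos_smul_left {E : Type*} [NormedAddCommGroup E] [NormedSpace ℝ E]
    {u w : E} {r : ℝ} (hr : 0 < r) (h : SameRay ℝ (r • u) w) (hw : ‖u‖ = ‖w‖) : u = w := by
  have hu := h.pos_smul_left (inv_pos.2 hr)
  rw [inv_smul_smul₀ hr.ne'] at hu
  exact hu.eq_of_norm_eq hw

section MagnitudeTorus

variable {N : ℕ} {m : Fin N → ℝ}

theorem abs_norm_sub_le_dist_of_mem_magSet {z : EuclideanSpace ℂ (Fin N)} (hz : z ∈ magSet N m)
    (x : EuclideanSpace ℂ (Fin N)) (ω : Fin N) : |‖x ω‖ - m ω| ≤ dist (x ω) (z ω) := by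
  rw [← hz ω, dist_eq_norm]
  exact abs_norm_sub_norm_le _ _

theorem infDist_magSet (hm : ∀ ω, 0 ≤ m ω) (x : EuclideanSpace ℂ (Fin N)) :
    infDist x (magSet N m) = √(∑ ω, |‖x ω‖ - m ω| ^ 2) := by
  -- the radial projection `m ω · x ω / ‖x ω‖`, written with `arg` so that `x ω = 0` needs no case
  set p : EuclideanSpace ℂ (Fin N) :=
    WithLp.toLp 2 fun ω => (m ω : ℂ) * Complex.exp (Complex.arg (x ω) * Complex.I)
  have hp : p ∈ magSet N m := fun ω => by
    simp [p, Complex.norm_exp_ofReal_mul_I, abs_of_nonneg (hm ω)]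
  have hxp : dist x p = √(∑ ω, |‖x ω‖ - m ω| ^ 2) := by
    rw [EuclideanSpace.dist_eq]
    congr with ω
    have hxω :
        x ω - p ω = ((‖x ω‖ - m ω : ℝ) : ℂ) * Complex.exp (Complex.arg (x ω) * Complex.I) := by
      rw [Complex.ofReal_sub, sub_mul, Complex.norm_mul_exp_arg_mul_I]
    rw [dist_eq_norm, hxω, norm_mul, Complex.norm_exp_ofReal_mul_I, mul_one, Complex.norm_real,
      Real.norm_eq_abs]
  refine le_antisymm (hxp ▸ infDist_le_dist_of_mem hp) ((le_infDist ⟨p, hp⟩).2 fun z hz => ?_)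
  rw [EuclideanSpace.dist_eq]
  gcongr with ω
  exact abs_norm_sub_le_dist_of_mem_magSet hz x ω

theorem mem_projSet_magSet_iff (hm : ∀ ω, 0 ≤ m ω) {x z : EuclideanSpace ℂ (Fin N)} :
    z ∈ projSet (magSet N m) x ↔
      z ∈ magSet N m ∧ ∀ ω, ‖x ω - z ω‖ = |‖x ω‖ - m ω| := by
  rw [projSet, mem_ofPred_eq, infDist_magSet hm, ← dist_eq_norm]
  refine and_congr_right fun hz => ?_
  have hle : ∀ ω ∈ Finset.univ, |‖x ω‖ - m ω| ^ 2 ≤ dist (x ω) (z ω) ^ 2 := fun ω _ => by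
    gcongr
    exact abs_norm_sub_le_dist_of_mem_magSet hz x ω
  rw [EuclideanSpace.dist_eq, Real.sqrt_inj (by positivity) (by positivity), eq_comm,
    Finset.sum_eq_sum_iff_of_le hle]
  simp only [Finset.mem_univ, true_implies, dist_eq_norm]
  refine forall_congr' fun ω => ?_
  rw [sq_eq_sq₀ (abs_nonneg _) (norm_nonneg _), eq_comm]

theorem mem_projSet_magSet_of_nonneg_smul (hm : ∀ ω, 0 ≤ m ω) {x z : EuclideanSpace ℂ (Fin N)}
    (hz : z ∈ magSet N m) (s : Fin N → ℝ) (hs : ∀ ω, 0 ≤ s ω) (hx : ∀ ω, x ω = s ω • z ω) :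
    z ∈ projSet (magSet N m) x := by
  refine (mem_projSet_magSet_iff hm).2 ⟨hz, fun ω => ?_⟩
  rw [hx ω, ← hz ω]
  exact (SameRay.sameRay_nonneg_smul_left (z ω) (hs ω)).norm_sub

theorem projSet_magSet_eq_singleton (hm : ∀ ω, 0 ≤ m ω) {x y : EuclideanSpace ℂ (Fin N)}
    (hy : y ∈ magSet N m) (t : Fin N → ℝ) (ht : ∀ ω, 0 < t ω) (hx : ∀ ω, x ω = t ω • y ω) :
    projSet (magSet N m) x = {y} := by
  ext z
  refine ⟨fun hz => ?_, fun hz => ?_⟩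
  · obtain ⟨hzT, hdist⟩ := (mem_projSet_magSet_iff hm).1 hz
    ext ω
    refine (SameRay.eq_of_pos_smul_left (ht ω) ?_ ((hy ω).trans (hzT ω).symm)).symm
    rw [sameRay_iff_norm_sub, ← hx ω, hdist ω, hzT ω]
  · rw [mem_singleton_iff.1 hz]
    exact mem_projSet_magSet_of_nonneg_smul hm hy t (fun ω => (ht ω).le) hx

end MagnitudeTorus

section DirReach

variable {E : Type*} [NormedAddCommGroup E] [Module ℝ E] {S : Set E} {b d : E}

theorem dirReach_eq_top (h : ∀ R : ℝ, 0 ≤ R → projSet S (b + R • d) = {b}) :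
    dirReach S b d = ⊤ := by
  have hset : {R : ℝ | 0 ≤ R ∧ projSet S (b + R • d) = {b}} = Ici 0 :=
    Set.ext fun R => ⟨And.left, fun hR => ⟨hR, h R hR⟩⟩
  rw [dirReach, hset, EReal.image_coe_Ici, csSup_Ico (EReal.coe_lt_top 0)]

theorem dirReach_eq_coe {ρ : ℝ} (hρ : 0 < ρ)
    (h : ∀ R : ℝ, 0 ≤ R → (projSet S (b + R • d) = {b} ↔ R < ρ)) :
    dirReach S b d = ρ := by
  have hset : {R : ℝ | 0 ≤ R ∧ projSet S (b + R • d) = {b}} = Ico 0 ρ :=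
    Set.ext fun R => and_congr_right (h R)
  rw [dirReach, hset, EReal.image_coe_Ico, csSup_Ico (EReal.coe_lt_coe_iff.2 hρ)]

end DirReach

theorem add_smul_normal_apply (y : EuclideanSpace ℂ (Fin N)) (ε : Fin N → ℝ) (ρ R : ℝ)
    (ω : Fin N) :
    (y + R • (WithLp.equiv 2 (Fin N → ℂ)).symm fun ω => ((ε ω / ρ : ℝ) : ℂ) * y ω) ω =
      (1 + R * ε ω / ρ) • y ω := by
  simp only [PiLp.add_apply, PiLp.smul_apply, WithLp.equiv_symm_apply, Complex.real_smul]
  push_cast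
  ring

section NormalRay

variable {N : ℕ} {m ε : Fin N → ℝ} {ρ R : ℝ} {x y : EuclideanSpace ℂ (Fin N)}

theorem projSet_magSet_normal_ray_eq_singleton (hm : ∀ ω, 0 ≤ m ω) (hy : y ∈ magSet N m)
    (hε : ∀ ω, ε ω = 1 ∨ ε ω = -1) (hρ : 0 < ρ) (hR0 : 0 ≤ R) (hR : ∀ ω, ε ω = -1 → R < ρ)
    (hx : ∀ ω, x ω = (1 + R * ε ω / ρ) • y ω) :
    projSet (magSet N m) x = {y} := by
  refine projSet_magSet_eq_singleton hm hy _ (fun ω => ?_) hx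
  rcases hε ω with h | h
  · rw [h, mul_one]
    have := div_nonneg hR0 hρ.le
    linarith
  · rw [h, mul_neg_one, neg_div, ← sub_eq_add_neg, sub_pos, div_lt_one hρ]
    exact hR ω h

theorem self_mem_projSet_magSet_normal_ray_at_radius (hm : ∀ ω, 0 ≤ m ω) (hy : y ∈ magSet N m)
    (hε : ∀ ω, ε ω = 1 ∨ ε ω = -1) (hρ : 0 < ρ) (hx : ∀ ω, x ω = (1 + ρ * ε ω / ρ) • y ω) :
    y ∈ projSet (magSet N m) x := by
  refine mem_projSet_magSet_of_nonneg_smul hm hy (fun ω => 1 + ε ω) (fun ω => ?_) (fun ω => ?_)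
  · rcases hε ω with h | h <;> rw [h] <;> norm_num
  · rw [hx, mul_div_cancel_left₀ _ hρ.ne']

theorem sign_smul_mem_projSet_magSet_normal_ray (hm : ∀ ω, 0 ≤ m ω) (hy : y ∈ magSet N m)
    (hε : ∀ ω, ε ω = 1 ∨ ε ω = -1) (hρ : 0 < ρ) (hR : ρ ≤ R)
    (hx : ∀ ω, x ω = (1 + R * ε ω / ρ) • y ω) :
    (WithLp.toLp 2 fun ω => ε ω • y ω) ∈ projSet (magSet N m) x := by
  refine mem_projSet_magSet_of_nonneg_smul hm (fun ω => ?_) (fun ω => ε ω + R / ρ)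
    (fun ω => ?_) (fun ω => ?_)
  · rcases hε ω with h | h <;> simp [h, hy ω]
  · have := (one_le_div hρ).2 hR
    rcases hε ω with h | h <;> rw [h] <;> linarith
  · rw [hx, PiLp.toLp_apply, smul_smul]
    congr 1
    rcases hε ω with h | h <;> rw [h] <;> ring

end NormalRay

/-- reach of the magnitude torus. For `y ∈ T`, signs `ε(ω) = ±1` and the unit
normal `d(ω) = ε(ω)·y(ω)/‖m‖`: (i) `P_T(y + R·d) = {y}` for `0 ≤ R < ‖m‖`; (ii) if all
signs are `+1` then `P_T(y + R·d) = {y}` for all `R ≥ 0` and the reach is `+∞`; (iii) if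
some sign is `-1` then `y + ‖m‖·d` has more than one nearest point in `T` and the reach is
`‖m‖`. -/
theorem statement15 (N : ℕ) (hN : 1 ≤ N) (m : Fin N → ℝ) (hm : ∀ ω, 0 < m ω)
    (y : EuclideanSpace ℂ (Fin N)) (hy : y ∈ magSet N m)
    (ε : Fin N → ℝ) (hε : ∀ ω, ε ω = 1 ∨ ε ω = -1)
    (normm : ℝ) (hnormm : normm = Real.sqrt (∑ ω, (m ω)^2))
    (d : EuclideanSpace ℂ (Fin N))
    (hd : d = (WithLp.equiv 2 (Fin N → ℂ)).symm
      (fun ω => ((ε ω / normm : ℝ) : ℂ) * y ω)) :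
    (∀ R : ℝ, 0 ≤ R → R < normm → projSet (magSet N m) (y + R • d) = {y}) ∧
    ((∀ ω, ε ω = 1) →
      (∀ R : ℝ, 0 ≤ R → projSet (magSet N m) (y + R • d) = {y}) ∧
      dirReach (magSet N m) y d = ⊤) ∧
    ((∃ ω₀, ε ω₀ = -1) →
      (∃ z₁ z₂ : EuclideanSpace ℂ (Fin N),
        z₁ ∈ projSet (magSet N m) (y + normm • d) ∧
        z₂ ∈ projSet (magSet N m) (y + normm • d) ∧ z₁ ≠ z₂) ∧
      dirReach (magSet N m) y d = ((normm : ℝ) : EReal)) := by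
  have hm₀ : ∀ ω, 0 ≤ m ω := fun ω => (hm ω).le
  have hρ : 0 < normm := hnormm ▸ Real.sqrt_pos.2
    (Finset.sum_pos (fun ω _ => pow_pos (hm ω) 2) (Finset.univ_nonempty_iff.2 ⟨⟨0, hN⟩⟩))
  have hray : ∀ R : ℝ, ∀ ω, (y + R • d) ω = (1 + R * ε ω / normm) • y ω :=
    fun R => hd ▸ add_smul_normal_apply y ε normm R
  have near : ∀ R : ℝ, 0 ≤ R → R < normm → projSet (magSet N m) (y + R • d) = {y} :=
    fun R hR0 hR =>
      projSet_magSet_normal_ray_eq_singleton hm₀ hy hε hρ hR0 (fun _ _ => hR) (hray R)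
  refine ⟨near, fun hall => ?_, fun ⟨ω₀, hω₀⟩ => ?_⟩
  · have far : ∀ R : ℝ, 0 ≤ R → projSet (magSet N m) (y + R • d) = {y} :=
      fun R hR0 => projSet_magSet_normal_ray_eq_singleton hm₀ hy hε hρ hR0
        (fun ω h => by linarith [hall ω]) (hray R)
    exact ⟨far, dirReach_eq_top far⟩
  set z : EuclideanSpace ℂ (Fin N) := WithLp.toLp 2 fun ω => ε ω • y ω
  have hz : ∀ R, normm ≤ R → z ∈ projSet (magSet N m) (y + R • d) :=
    fun R hR => sign_smul_mem_projSet_magSet_normal_ray hm₀ hy hε hρ hR (hray R)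
  have hzy : z ≠ y := fun h => by
    have h₀ : -y ω₀ = y ω₀ := by simpa [z, hω₀] using congrArg (· ω₀) h
    have := hy ω₀
    rw [neg_eq_self.1 h₀, norm_zero] at this
    exact (hm ω₀).ne this
  refine ⟨⟨y, z, self_mem_projSet_magSet_normal_ray_at_radius hm₀ hy hε hρ (hray normm),
    hz normm le_rfl, hzy.symm⟩, dirReach_eq_coe hρ fun R hR0 => ?_⟩
  exact ⟨fun h => not_le.1 fun hR => hzy (by simpa [h] using hz R hR), near R hR0⟩
end
end
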